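/- arXiv:2310.20145 — 2 statements merged into one kernel-verified Lean document; each statement's English description precedes it below -/
import Mathlib

section
/- Let K be a positive semidefinite symmetric n×n matrix and E a symmetric matrix with every entry bounded in absolute value by e. If σ > 0 and ‖(σ²I + K)^{-1}E‖ < 1, then |log det(I + σ^{-2}(K + E)) - log det(I + σ^{-2}K)| ≤ n^{3/2} σ^{-2} e / (1 - ‖(σ²I + K)^{-1}E‖) where ‖·‖ denotes the operator norm. -/
open scoped Matrix.Norms.L2Operator
open scoped MatrixOrder
open Matrix

section Aux

lemma aux_log_bound {x r : ℝ} (hx : |x| ≤ r) (hr : r < 1) :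
    |Real.log (1 + x)| ≤ |x| / (1 - r) := by
  have hr0 : 0 ≤ r := le_trans (abs_nonneg x) hx
  have h1r : 0 < 1 - r := by linarith
  have hx1 : -r ≤ x := (abs_le.mp hx).1
  have hx2 : x ≤ r := (abs_le.mp hx).2
  have hpos : 0 < 1 + x := by linarith
  rcases le_or_gt 0 x with h | h
  · have hlog : Real.log (1 + x) ≤ x := by
      have := Real.log_le_sub_one_of_pos hpos
      linarith
    have hlogn : 0 ≤ Real.log (1 + x) := Real.log_nonneg (by linarith)
    rw [abs_of_nonneg hlogn, abs_of_nonneg h]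
    calc Real.log (1+x) ≤ x := hlog
      _ ≤ x / (1 - r) := by
        rw [le_div_iff₀ h1r]; nlinarith
  · have hlogn : Real.log (1 + x) ≤ 0 := Real.log_nonpos (by linarith) (by linarith)
    rw [abs_of_nonpos hlogn, abs_of_neg h]
    have : -Real.log (1 + x) = Real.log (1 + x)⁻¹ := by rw [Real.log_inv]
    rw [this]
    have hinvpos : 0 < (1 + x)⁻¹ := inv_pos.mpr hpos
    have hlog2 : Real.log (1 + x)⁻¹ ≤ (1 + x)⁻¹ - 1 := Real.log_le_sub_one_of_pos hinvpos
    have : (1 + x)⁻¹ - 1 = -x / (1 + x) := by field_simp; ring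
    rw [this] at hlog2
    calc Real.log (1+x)⁻¹ ≤ -x / (1 + x) := hlog2
      _ ≤ -x / (1 - r) := by
        apply div_le_div_of_nonneg_left (by linarith) h1r (by linarith)

lemma aux_dot_self_nonneg {n : ℕ} (v : Fin n → ℝ) : 0 ≤ v ⬝ᵥ v :=
  Finset.sum_nonneg fun _ _ => mul_self_nonneg _

lemma aux_cs {n : ℕ} (v w : Fin n → ℝ) :
    v ⬝ᵥ w ≤ Real.sqrt (v ⬝ᵥ v) * Real.sqrt (w ⬝ᵥ w) := by
  have h := Finset.sum_mul_sq_le_sq_mul_sq Finset.univ v w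
  have h2 : (v ⬝ᵥ w) ^ 2 ≤ (v ⬝ᵥ v) * (w ⬝ᵥ w) := by
    simpa [dotProduct, pow_two, mul_assoc, mul_comm, mul_left_comm] using h
  calc v ⬝ᵥ w ≤ |v ⬝ᵥ w| := le_abs_self _
    _ = Real.sqrt ((v ⬝ᵥ w) ^ 2) := (Real.sqrt_sq_eq_abs _).symm
    _ ≤ Real.sqrt ((v ⬝ᵥ v) * (w ⬝ᵥ w)) := Real.sqrt_le_sqrt h2
    _ = _ := Real.sqrt_mul (aux_dot_self_nonneg v) _

lemma aux_A_lower {n : ℕ} {K : Matrix (Fin n) (Fin n) ℝ} {σ : ℝ} (hK : K.PosSemidef)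
    (v : Fin n → ℝ) :
    σ ^ 2 * (v ⬝ᵥ v) ≤ v ⬝ᵥ ((σ ^ 2 • (1 : Matrix (Fin n) (Fin n) ℝ) + K) *ᵥ v) := by
  have hKv : 0 ≤ v ⬝ᵥ (K *ᵥ v) := by simpa using hK.dotProduct_mulVec_nonneg v
  rw [Matrix.add_mulVec, Matrix.smul_mulVec, Matrix.one_mulVec, dotProduct_add,
    dotProduct_smul, smul_eq_mul]
  linarith

lemma aux_posdef {n : ℕ} {K : Matrix (Fin n) (Fin n) ℝ} {σ : ℝ} (hK : K.PosSemidef)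
    (hσ : 0 < σ) : (σ ^ 2 • (1 : Matrix (Fin n) (Fin n) ℝ) + K).PosDef := by
  have h1 : (σ ^ 2 • (1 : Matrix (Fin n) (Fin n) ℝ)).PosDef := by
    rw [Matrix.smul_one_eq_diagonal]
    exact Matrix.posDef_diagonal_iff.mpr fun i => by positivity
  exact h1.add_posSemidef hK

lemma aux_inv_bound {n : ℕ} {K : Matrix (Fin n) (Fin n) ℝ} {σ : ℝ} (hK : K.PosSemidef)
    (hσ : 0 < σ) (u : Fin n → ℝ) :
    Real.sqrt (((σ ^ 2 • (1 : Matrix (Fin n) (Fin n) ℝ) + K)⁻¹ *ᵥ u) ⬝ᵥ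
        ((σ ^ 2 • (1 : Matrix (Fin n) (Fin n) ℝ) + K)⁻¹ *ᵥ u)) ≤
      σ⁻¹ ^ 2 * Real.sqrt (u ⬝ᵥ u) := by
  set A := σ ^ 2 • (1 : Matrix (Fin n) (Fin n) ℝ) + K with hAdef
  have hA : A.PosDef := aux_posdef hK hσ
  set w := A⁻¹ *ᵥ u with hw
  have hAw : A *ᵥ w = u := by
    rw [hw, Matrix.mulVec_mulVec, Matrix.mul_nonsing_inv _ hA.det_pos.ne'.isUnit,
      Matrix.one_mulVec]
  have h1 : σ ^ 2 * (w ⬝ᵥ w) ≤ w ⬝ᵥ u := by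
    have := aux_A_lower hK (σ := σ) w
    rwa [hAw] at this
  have h2 : w ⬝ᵥ u ≤ Real.sqrt (w ⬝ᵥ w) * Real.sqrt (u ⬝ᵥ u) := aux_cs w u
  set a := Real.sqrt (w ⬝ᵥ w) with ha
  set b := Real.sqrt (u ⬝ᵥ u) with hb
  have haw : w ⬝ᵥ w = a ^ 2 := (Real.sq_sqrt (aux_dot_self_nonneg w)).symm
  have ha0 : 0 ≤ a := Real.sqrt_nonneg _
  have hb0 : 0 ≤ b := Real.sqrt_nonneg _
  have key : σ ^ 2 * a ^ 2 ≤ a * b := by rw [← haw]; linarith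
  rcases eq_or_lt_of_le ha0 with h | h
  · rw [← h]; positivity
  · have hs : (0:ℝ) < σ ^ 2 := by positivity
    have h3 : σ ^ 2 * a ≤ b := by nlinarith
    rw [inv_pow]
    calc a = (σ ^ 2)⁻¹ * (σ ^ 2 * a) := by field_simp
      _ ≤ (σ ^ 2)⁻¹ * b := mul_le_mul_of_nonneg_left h3 (by positivity)

lemma aux_frob_left {n : ℕ} {B : Matrix (Fin n) (Fin n) ℝ} {c : ℝ}
    (hB : ∀ u : Fin n → ℝ, (B *ᵥ u) ⬝ᵥ (B *ᵥ u) ≤ c * (u ⬝ᵥ u))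
    (M : Matrix (Fin n) (Fin n) ℝ) :
    ∑ i, ∑ j, (B * M) i j ^ 2 ≤ c * ∑ i, ∑ j, M i j ^ 2 := by
  have swap : ∀ N : Matrix (Fin n) (Fin n) ℝ, ∑ i, ∑ j, N i j ^ 2 = ∑ j, ∑ i, N i j ^ 2 :=
    fun _ => by rw [Finset.sum_comm]
  rw [swap (B * M), swap M, Finset.mul_sum]
  apply Finset.sum_le_sum
  intro j _
  have h := hB (fun k => M k j)
  have e1 : ∀ i, (B * M) i j = (B *ᵥ fun k => M k j) i := by
    intro i; simp [Matrix.mul_apply, Matrix.mulVec, dotProduct]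
  calc ∑ i, (B * M) i j ^ 2 = (B *ᵥ fun k => M k j) ⬝ᵥ (B *ᵥ fun k => M k j) := by
        simp [dotProduct, e1, pow_two]
    _ ≤ c * ((fun k => M k j) ⬝ᵥ (fun k => M k j)) := h
    _ = c * ∑ i, M i j ^ 2 := by simp [dotProduct, pow_two]

lemma aux_frob_right {n : ℕ} {B : Matrix (Fin n) (Fin n) ℝ} {c : ℝ}
    (hBt : Bᵀ = B)
    (hB : ∀ u : Fin n → ℝ, (B *ᵥ u) ⬝ᵥ (B *ᵥ u) ≤ c * (u ⬝ᵥ u))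
    (M : Matrix (Fin n) (Fin n) ℝ) :
    ∑ i, ∑ j, (M * B) i j ^ 2 ≤ c * ∑ i, ∑ j, M i j ^ 2 := by
  have h1 : ∑ i, ∑ j, (M * B) i j ^ 2 = ∑ i, ∑ j, (B * Mᵀ) i j ^ 2 := by
    rw [Finset.sum_comm]
    apply Finset.sum_congr rfl; intro i _; apply Finset.sum_congr rfl; intro j _
    rw [show (B * Mᵀ) i j = ((B * Mᵀ)ᵀ) j i from rfl, Matrix.transpose_mul,
      Matrix.transpose_transpose, hBt]
  have h2 : ∑ i, ∑ j, (Mᵀ) i j ^ 2 = ∑ i, ∑ j, M i j ^ 2 := by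
    rw [Finset.sum_comm]; rfl
  rw [h1, ← h2]
  exact aux_frob_left hB Mᵀ

lemma aux_det_one_add {n : ℕ} {S : Matrix (Fin n) (Fin n) ℝ} (hS : S.IsHermitian) :
    (1 + S).det = ∏ i, (1 + hS.eigenvalues i) := by
  set U : Matrix (Fin n) (Fin n) ℝ := (hS.eigenvectorUnitary : Matrix (Fin n) (Fin n) ℝ)
    with hUdef
  have hU : U * star U = 1 := Matrix.mem_unitaryGroup_iff.mp hS.eigenvectorUnitary.2
  have h1 : (1 : Matrix (Fin n) (Fin n) ℝ) + S
      = U * (1 + diagonal (RCLike.ofReal ∘ hS.eigenvalues)) * star U := by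
    rw [Matrix.mul_add, Matrix.add_mul, Matrix.mul_one, hU]
    congr 1
    have h := hS.spectral_theorem
    rw [Unitary.conjStarAlgAut_apply] at h
    exact h
  rw [h1, Matrix.det_mul_right_comm, hU, Matrix.one_mul]
  rw [show (1 : Matrix (Fin n) (Fin n) ℝ) = diagonal (fun _ => 1) by simp,
    Matrix.diagonal_add, Matrix.det_diagonal]
  simp

lemma aux_trace_sq {n : ℕ} {S : Matrix (Fin n) (Fin n) ℝ} (hS : S.IsHermitian) :
    ∑ i, (hS.eigenvalues i) ^ 2 = ∑ i, ∑ j, S i j ^ 2 := by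
  set U : Matrix (Fin n) (Fin n) ℝ := (hS.eigenvectorUnitary : Matrix (Fin n) (Fin n) ℝ)
    with hUdef
  have hU : U * star U = 1 := Matrix.mem_unitaryGroup_iff.mp hS.eigenvectorUnitary.2
  have hD : star U * S * U = diagonal (RCLike.ofReal ∘ hS.eigenvalues) :=
    by have h := hS.conjStarAlgAut_star_eigenvectorUnitary
       rw [Unitary.conjStarAlgAut_apply] at h
       simpa using h
  have key : Matrix.trace ((star U * S * U) * (star U * S * U)) = Matrix.trace (S * S) := by
    have h2 : (star U * S * U) * (star U * S * U) = star U * (S * S) * U := by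
      calc (star U * S * U) * (star U * S * U)
          = star U * (S * ((U * star U) * (S * U))) := by
            simp only [Matrix.mul_assoc]
        _ = star U * (S * S) * U := by rw [hU]; simp only [Matrix.one_mul, Matrix.mul_assoc]
    rw [h2, Matrix.trace_mul_cycle, ← Matrix.mul_assoc, hU, Matrix.one_mul]
  rw [hD, Matrix.diagonal_mul_diagonal, Matrix.trace_diagonal] at key
  have hsym : ∀ a b, S a b = S b a := fun a b => by
    conv_lhs => rw [← hS]
    simp [Matrix.conjTranspose_apply]
  calc ∑ i, (hS.eigenvalues i) ^ 2
      = ∑ i, ((RCLike.ofReal ∘ hS.eigenvalues) i * (RCLike.ofReal ∘ hS.eigenvalues) i) := by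
        simp [pow_two]
    _ = (S * S).trace := key
    _ = ∑ i, ∑ j, S i j ^ 2 := by
        rw [Matrix.trace]
        apply Finset.sum_congr rfl
        intro i _
        rw [Matrix.diag_apply, Matrix.mul_apply]
        apply Finset.sum_congr rfl
        intro j _
        rw [pow_two, hsym j i]

lemma aux_eig_bound {n : ℕ} {A E S : Matrix (Fin n) (Fin n) ℝ}
    {B : Matrix (Fin n) (Fin n) ℝ}
    (hBB : B * B = A⁻¹) (hAinv : A * A⁻¹ = 1)
    (hSdef : S = B * E * B) (hS : S.IsHermitian) (i : Fin n) :
    |hS.eigenvalues i| ≤ ‖A⁻¹ * E‖ := by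
  set μ := hS.eigenvalues i with hμ
  set v : EuclideanSpace ℝ (Fin n) := hS.eigenvectorBasis i with hv
  have hveq : S *ᵥ ⇑v = μ • ⇑v := hS.mulVec_eigenvectorBasis i
  set w : Fin n → ℝ := B *ᵥ ⇑v with hw
  have hMw : (A⁻¹ * E) *ᵥ w = μ • w := by
    rw [hw, Matrix.mulVec_mulVec, ← hBB]
    have : B * B * E * B = B * S := by rw [hSdef]; noncomm_ring
    rw [this, ← Matrix.mulVec_mulVec, hveq, Matrix.mulVec_smul]
  have hv0 : ⇑v ≠ 0 := by
    intro h
    have : v = 0 := by ext j; exact congrFun h j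
    have hn := hS.eigenvectorBasis.orthonormal.1 i
    rw [hv] at this
    rw [this] at hn
    simp at hn
  have hw0 : w ≠ 0 := by
    intro h
    apply hv0
    have h2 : A⁻¹ *ᵥ ⇑v = 0 := by
      rw [← hBB, ← Matrix.mulVec_mulVec, ← hw, h, Matrix.mulVec_zero]
    have h3 : ⇑v = (A * A⁻¹) *ᵥ ⇑v := by rw [hAinv, Matrix.one_mulVec]
    rw [h3, ← Matrix.mulVec_mulVec, h2, Matrix.mulVec_zero]
  set x : EuclideanSpace ℝ (Fin n) := (EuclideanSpace.equiv (Fin n) ℝ).symm w with hx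
  have hxw : ⇑x = w := rfl
  have hnorm := Matrix.l2_opNorm_mulVec (A⁻¹ * E) x
  have hMx : (A⁻¹ * E) *ᵥ x = μ • w := hMw
  rw [hMx] at hnorm
  have hsmul : (EuclideanSpace.equiv (Fin n) ℝ).symm (μ • w) = μ • x := by
    rw [hx]; exact map_smul _ _ _
  rw [hsmul, norm_smul] at hnorm
  have hxpos : 0 < ‖x‖ := by
    rw [norm_pos_iff]
    intro h
    apply hw0
    rw [← hxw, h]; rfl
  have : |μ| * ‖x‖ ≤ ‖A⁻¹ * E‖ * ‖x‖ := by
    simpa [Real.norm_eq_abs] using hnorm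
  exact le_of_mul_le_mul_right this hxpos

end Aux

/-- Bound on the perturbation of the log-determinant information gain under an
entrywise-bounded symmetric perturbation `E` of a PSD matrix `K`. -/
theorem logdet_information_gain_perturbation {n : ℕ}
    (K E : Matrix (Fin n) (Fin n) ℝ) (e σ : ℝ)
    (hK : K.PosSemidef) (hE : E.IsSymm) (hEe : ∀ i j, |E i j| ≤ e)
    (hσ : 0 < σ)
    (hKE : ((1 : Matrix (Fin n) (Fin n) ℝ) + σ⁻¹ ^ 2 • (K + E)).PosDef)
    (hsmall : ‖(σ ^ 2 • (1 : Matrix (Fin n) (Fin n) ℝ) + K)⁻¹ * E‖ < 1) :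
    |Real.log ((1 : Matrix (Fin n) (Fin n) ℝ) + σ⁻¹ ^ 2 • (K + E)).det -
      Real.log ((1 : Matrix (Fin n) (Fin n) ℝ) + σ⁻¹ ^ 2 • K).det| ≤
      (n : ℝ) ^ ((3 : ℝ) / 2) * σ⁻¹ ^ 2 * e /
        (1 - ‖(σ ^ 2 • (1 : Matrix (Fin n) (Fin n) ℝ) + K)⁻¹ * E‖) := by
  rcases Nat.eq_zero_or_pos n with hn | hn
  · subst hn
    have h1r : 0 < 1 - ‖(σ ^ 2 • (1 : Matrix (Fin 0) (Fin 0) ℝ) + K)⁻¹ * E‖ := by linarith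
    rw [Matrix.det_fin_zero, Matrix.det_fin_zero]
    simp only [Real.log_one, sub_zero, abs_zero]
    apply div_nonneg _ h1r.le
    rw [Nat.cast_zero, Real.zero_rpow (by norm_num)]
    simp
  -- main case
  have he0 : 0 ≤ e := le_trans (abs_nonneg _) (hEe ⟨0, hn⟩ ⟨0, hn⟩)
  set A := σ ^ 2 • (1 : Matrix (Fin n) (Fin n) ℝ) + K with hAdef
  set r := ‖A⁻¹ * E‖ with hrdef
  have hr0 : 0 ≤ r := norm_nonneg _
  have h1r : 0 < 1 - r := by rw [hrdef]; linarith [hsmall]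
  have hA : A.PosDef := aux_posdef hK hσ
  have hAinv : A * A⁻¹ = 1 := Matrix.mul_nonsing_inv _ hA.det_pos.ne'.isUnit
  have hAinvPD : A⁻¹.PosDef := hA.inv
  set B := CFC.sqrt A⁻¹ with hBdef
  have hBPSD : B.PosSemidef := (CFC.sqrt_nonneg _).posSemidef
  have hBB : B * B = A⁻¹ := CFC.sqrt_mul_sqrt_self _ hAinvPD.posSemidef.nonneg
  have hBH : B.IsHermitian := hBPSD.1
  have hBt : Bᵀ = B := by
    have h := hBH
    rwa [Matrix.IsHermitian, Matrix.conjTranspose_eq_transpose_of_trivial] at h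
  have hEH : E.IsHermitian := by
    rw [Matrix.IsHermitian, Matrix.conjTranspose_eq_transpose_of_trivial]; exact hE
  set S := B * E * B with hSdef
  have hS : S.IsHermitian := by
    rw [Matrix.IsHermitian, hSdef, Matrix.conjTranspose_mul, Matrix.conjTranspose_mul,
      hBH.eq, hEH.eq, Matrix.mul_assoc]
  set μ := hS.eigenvalues with hμdef
  have hμr : ∀ i, |μ i| ≤ r := fun i => aux_eig_bound hBB hAinv hSdef hS i
  have hμ1 : ∀ i, 0 < 1 + μ i := fun i => by
    have h := (abs_le.mp (hμr i)).1
    linarith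
  have hss : σ⁻¹ ^ 2 * σ ^ 2 = 1 := by field_simp
  have heq2 : (1 : Matrix (Fin n) (Fin n) ℝ) + σ⁻¹ ^ 2 • K = σ⁻¹ ^ 2 • A := by
    rw [hAdef, smul_add (σ⁻¹ ^ 2) (σ ^ 2 • (1 : Matrix (Fin n) (Fin n) ℝ)) K,
      smul_smul, hss, one_smul]
  have heq1 : (1 : Matrix (Fin n) (Fin n) ℝ) + σ⁻¹ ^ 2 • (K + E) = σ⁻¹ ^ 2 • (A + E) := by
    rw [hAdef, add_assoc,
      smul_add (σ⁻¹ ^ 2) (σ ^ 2 • (1 : Matrix (Fin n) (Fin n) ℝ)) (K + E),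
      smul_smul, hss, one_smul]
  have hcard : Fintype.card (Fin n) = n := Fintype.card_fin n
  have hpow : (0:ℝ) < (σ⁻¹ ^ 2) ^ n := by positivity
  have d2 : ((1 : Matrix (Fin n) (Fin n) ℝ) + σ⁻¹ ^ 2 • K).det = (σ⁻¹ ^ 2) ^ n * A.det := by
    rw [heq2, Matrix.det_smul, hcard]
  have d1 : ((1 : Matrix (Fin n) (Fin n) ℝ) + σ⁻¹ ^ 2 • (K + E)).det
      = (σ⁻¹ ^ 2) ^ n * (A + E).det := by
    rw [heq1, Matrix.det_smul, hcard]
  have hdetA : 0 < A.det := hA.det_pos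
  have hdetKE : 0 < ((1 : Matrix (Fin n) (Fin n) ℝ) + σ⁻¹ ^ 2 • (K + E)).det := hKE.det_pos
  have hdetAE : 0 < (A + E).det := by
    rw [d1] at hdetKE
    by_contra hle; push_neg at hle
    nlinarith
  have hdetkey : (A + E).det = A.det * ((1 : Matrix (Fin n) (Fin n) ℝ) + S).det := by
    have h6 : ((1 : Matrix (Fin n) (Fin n) ℝ) + S).det
        = ((1 : Matrix (Fin n) (Fin n) ℝ) + A⁻¹ * E).det := by
      rw [hSdef, show B * E * B = (B * E) * B from rfl, Matrix.det_one_add_mul_comm,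
        show B * (B * E) = (B * B) * E by rw [Matrix.mul_assoc], hBB]
    have h7 : A * ((1 : Matrix (Fin n) (Fin n) ℝ) + A⁻¹ * E) = A + E := by
      rw [Matrix.mul_add, Matrix.mul_one, ← Matrix.mul_assoc, hAinv, Matrix.one_mul]
    calc (A + E).det = (A * ((1 : Matrix (Fin n) (Fin n) ℝ) + A⁻¹ * E)).det := by rw [h7]
      _ = A.det * ((1 : Matrix (Fin n) (Fin n) ℝ) + A⁻¹ * E).det := Matrix.det_mul _ _
      _ = A.det * ((1 : Matrix (Fin n) (Fin n) ℝ) + S).det := by rw [h6]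
  have hdet1S : 0 < ((1 : Matrix (Fin n) (Fin n) ℝ) + S).det := by
    by_contra hle; push_neg at hle
    nlinarith
  have hLHS : Real.log ((1 : Matrix (Fin n) (Fin n) ℝ) + σ⁻¹ ^ 2 • (K + E)).det
      - Real.log ((1 : Matrix (Fin n) (Fin n) ℝ) + σ⁻¹ ^ 2 • K).det
      = Real.log ((1 : Matrix (Fin n) (Fin n) ℝ) + S).det := by
    rw [d1, d2, hdetkey,
      Real.log_mul hpow.ne' (mul_pos hdetA hdet1S).ne',
      Real.log_mul hdetA.ne' hdet1S.ne',
      Real.log_mul hpow.ne' hdetA.ne']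
    ring
  rw [hLHS]
  have hprod : ((1 : Matrix (Fin n) (Fin n) ℝ) + S).det = ∏ i, (1 + μ i) := aux_det_one_add hS
  have hlogsum : Real.log ((1 : Matrix (Fin n) (Fin n) ℝ) + S).det
      = ∑ i, Real.log (1 + μ i) := by
    rw [hprod, Real.log_prod]
    intro i _; exact (hμ1 i).ne'
  rw [hlogsum]
  have step1 : |∑ i, Real.log (1 + μ i)| ≤ ∑ i, |Real.log (1 + μ i)| :=
    Finset.abs_sum_le_sum_abs _ _
  have step2 : ∑ i, |Real.log (1 + μ i)| ≤ ∑ i, |μ i| / (1 - r) :=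
    Finset.sum_le_sum fun i _ => aux_log_bound (hμr i) (by linarith)
  have hsumsq : ∑ i, (μ i) ^ 2 = ∑ i, ∑ j, S i j ^ 2 := aux_trace_sq hS
  have hB2 : ∀ u : Fin n → ℝ, (B *ᵥ u) ⬝ᵥ (B *ᵥ u) ≤ σ⁻¹ ^ 2 * (u ⬝ᵥ u) := by
    intro u
    have hrw : (B *ᵥ u) ⬝ᵥ (B *ᵥ u) = u ⬝ᵥ (A⁻¹ *ᵥ u) := by
      rw [Matrix.dotProduct_mulVec, ← Matrix.mulVec_transpose, hBt, Matrix.mulVec_mulVec,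
        hBB, dotProduct_comm]
    have h1 := aux_cs u (A⁻¹ *ᵥ u)
    have h2 : Real.sqrt ((A⁻¹ *ᵥ u) ⬝ᵥ (A⁻¹ *ᵥ u)) ≤ σ⁻¹ ^ 2 * Real.sqrt (u ⬝ᵥ u) := by
      have h := aux_inv_bound hK hσ u
      rwa [← hAdef] at h
    calc (B *ᵥ u) ⬝ᵥ (B *ᵥ u) = u ⬝ᵥ (A⁻¹ *ᵥ u) := hrw
      _ ≤ Real.sqrt (u ⬝ᵥ u) * Real.sqrt ((A⁻¹ *ᵥ u) ⬝ᵥ (A⁻¹ *ᵥ u)) := h1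
      _ ≤ Real.sqrt (u ⬝ᵥ u) * (σ⁻¹ ^ 2 * Real.sqrt (u ⬝ᵥ u)) :=
          mul_le_mul_of_nonneg_left h2 (Real.sqrt_nonneg _)
      _ = σ⁻¹ ^ 2 * (Real.sqrt (u ⬝ᵥ u) * Real.sqrt (u ⬝ᵥ u)) := by ring
      _ = σ⁻¹ ^ 2 * (u ⬝ᵥ u) := by rw [Real.mul_self_sqrt (aux_dot_self_nonneg u)]
  have hFS : ∑ i, ∑ j, S i j ^ 2 ≤ σ⁻¹ ^ 2 * (σ⁻¹ ^ 2 * ∑ i, ∑ j, E i j ^ 2) := by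
    calc ∑ i, ∑ j, S i j ^ 2 = ∑ i, ∑ j, ((B * E) * B) i j ^ 2 := by rw [hSdef]
      _ ≤ σ⁻¹ ^ 2 * ∑ i, ∑ j, (B * E) i j ^ 2 := aux_frob_right hBt hB2 (B * E)
      _ ≤ σ⁻¹ ^ 2 * (σ⁻¹ ^ 2 * ∑ i, ∑ j, E i j ^ 2) :=
          mul_le_mul_of_nonneg_left (aux_frob_left hB2 E) (by positivity)
  have hFE : ∑ i, ∑ j, E i j ^ 2 ≤ (n : ℝ) ^ 2 * e ^ 2 := by
    have hste : ∀ i j : Fin n, E i j ^ 2 ≤ e ^ 2 := by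
      intro i j
      have h := hEe i j
      nlinarith [abs_nonneg (E i j), le_abs_self (E i j), neg_abs_le (E i j)]
    have h1 : ∑ i, ∑ j, E i j ^ 2 ≤ ∑ _i : Fin n, ∑ _j : Fin n, e ^ 2 :=
      Finset.sum_le_sum fun i _ => Finset.sum_le_sum fun j _ => hste i j
    have h2 : ∑ _i : Fin n, ∑ _j : Fin n, e ^ 2 = (n : ℝ) ^ 2 * e ^ 2 := by
      simp [Finset.sum_const, Finset.card_univ, nsmul_eq_mul]
      ring
    rw [h2] at h1
    exact h1
  have hsum_sq_bound : ∑ i, (μ i) ^ 2 ≤ (σ⁻¹ ^ 2 * (n : ℝ) * e) ^ 2 := by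
    rw [hsumsq]
    have hmul := mul_le_mul_of_nonneg_left hFE (by positivity : (0:ℝ) ≤ σ⁻¹ ^ 2)
    have hmul2 := mul_le_mul_of_nonneg_left hmul (by positivity : (0:ℝ) ≤ σ⁻¹ ^ 2)
    calc ∑ i, ∑ j, S i j ^ 2 ≤ σ⁻¹ ^ 2 * (σ⁻¹ ^ 2 * ∑ i, ∑ j, E i j ^ 2) := hFS
      _ ≤ σ⁻¹ ^ 2 * (σ⁻¹ ^ 2 * ((n : ℝ) ^ 2 * e ^ 2)) := hmul2
      _ = (σ⁻¹ ^ 2 * (n : ℝ) * e) ^ 2 := by ring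
  have habs_sum : ∑ i, |μ i| ≤ Real.sqrt n * Real.sqrt (∑ i, (μ i) ^ 2) := by
    have h := Finset.sum_mul_sq_le_sq_mul_sq Finset.univ
      (fun _ : Fin n => (1 : ℝ)) (fun i => |μ i|)
    have h' : (∑ i, |μ i|) ^ 2 ≤ (n : ℝ) * ∑ i, (μ i) ^ 2 := by
      simpa [sq_abs, Finset.card_univ] using h
    calc ∑ i, |μ i| = Real.sqrt ((∑ i, |μ i|) ^ 2) :=
        (Real.sqrt_sq (Finset.sum_nonneg fun i _ => abs_nonneg _)).symm
      _ ≤ Real.sqrt ((n : ℝ) * ∑ i, (μ i) ^ 2) := Real.sqrt_le_sqrt h'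
      _ = Real.sqrt n * Real.sqrt (∑ i, (μ i) ^ 2) := Real.sqrt_mul (Nat.cast_nonneg n) _
  have hsqrt_bound : Real.sqrt (∑ i, (μ i) ^ 2) ≤ σ⁻¹ ^ 2 * (n : ℝ) * e := by
    calc Real.sqrt (∑ i, (μ i) ^ 2) ≤ Real.sqrt ((σ⁻¹ ^ 2 * (n : ℝ) * e) ^ 2) :=
        Real.sqrt_le_sqrt hsum_sq_bound
      _ = σ⁻¹ ^ 2 * (n : ℝ) * e := Real.sqrt_sq (by positivity)
  have h32 : ((n : ℝ)) ^ ((3 : ℝ) / 2) = Real.sqrt n * (n : ℝ) := by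
    rw [show (3 : ℝ) / 2 = 1 / 2 + 1 by norm_num,
      Real.rpow_add (by exact_mod_cast hn) , Real.rpow_one, ← Real.sqrt_eq_rpow]
  have hnum : ∑ i, |μ i| ≤ Real.sqrt n * (σ⁻¹ ^ 2 * (n : ℝ) * e) :=
    le_trans habs_sum (mul_le_mul_of_nonneg_left hsqrt_bound (Real.sqrt_nonneg _))
  calc |∑ i, Real.log (1 + μ i)| ≤ ∑ i, |Real.log (1 + μ i)| := step1
    _ ≤ ∑ i, |μ i| / (1 - r) := step2
    _ = (∑ i, |μ i|) / (1 - r) := by rw [← Finset.sum_div]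
    _ ≤ (Real.sqrt n * (σ⁻¹ ^ 2 * (n : ℝ) * e)) / (1 - r) := by
        exact div_le_div_of_nonneg_right hnum h1r.le
    _ = (n : ℝ) ^ ((3 : ℝ) / 2) * σ⁻¹ ^ 2 * e / (1 - r) := by rw [h32]; ring
end

section
/- Let F be a real n×n symmetric matrix with ‖F‖ < 1 (operator norm). Then log det(I − F) = Tr(log(I − F)) and |log det(I − F) + Tr(F)| ≤ ‖F‖²_F / (2(1 − ‖F‖)), where ‖F‖_F is the Frobenius norm. -/
open scoped Matrix.Norms.L2Operator

lemma scalar_log_bound {t : ℝ} (ht : |t| < 1) :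
    |Real.log (1 - t) + t| ≤ t ^ 2 / (2 * (1 - |t|)) := by
  have h0 : (0:ℝ) < 1 - |t| := by linarith
  have hs : HasSum (fun i : ℕ => t ^ (i + 1) / (i + 1)) (-Real.log (1 - t)) :=
    Real.hasSum_pow_div_log_of_abs_lt_one ht
  have hs2 : HasSum (fun i : ℕ => t ^ (i + 1 + 1) / (i + 1 + 1)) (-Real.log (1 - t) - t) := by
    have hsum1 : HasSum (fun i : ℕ => t ^ (i + 1) / (i + 1))
        ((-Real.log (1 - t) - t) + ∑ i ∈ Finset.range 1, t ^ (i + 1) / ((i:ℝ) + 1)) := by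
      simpa using hs
    have h' := (hasSum_nat_add_iff (f := fun i : ℕ => t ^ (i + 1) / (i + 1)) 1).mpr hsum1
    convert h' using 2 with i
    · rfl
    push_cast
    ring
  have hgeom : HasSum (fun i : ℕ => t ^ 2 / 2 * |t| ^ i) (t ^ 2 / 2 * (1 - |t|)⁻¹) := by
    simpa using (hasSum_geometric_of_lt_one (abs_nonneg t) ht).mul_left (t ^ 2 / 2)
  have habs : ∀ i : ℕ, |t ^ (i + 1 + 1) / (i + 1 + 1)| ≤ t ^ 2 / 2 * |t| ^ i := by
    intro i
    have hi0 : (0:ℝ) ≤ (i:ℝ) := Nat.cast_nonneg i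
    have hpos : (0:ℝ) < (i:ℝ) + 1 + 1 := by linarith
    have h2 : (2:ℝ) ≤ (i:ℝ) + 1 + 1 := by linarith
    rw [abs_div, abs_pow, abs_of_pos hpos]
    have hpow : |t| ^ (i + 1 + 1) = t ^ 2 * |t| ^ i := by
      rw [show i + 1 + 1 = 2 + i from by ring, pow_add, sq_abs]
    rw [hpow]
    calc t ^ 2 * |t| ^ i / ((i:ℝ) + 1 + 1) ≤ t ^ 2 * |t| ^ i / 2 :=
          div_le_div_of_nonneg_left (by positivity) (by norm_num) h2
      _ = t ^ 2 / 2 * |t| ^ i := by ring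
  have upper := hasSum_le (fun i => (le_abs_self _).trans (habs i)) hs2 hgeom
  have lower := hasSum_le (fun i => (neg_abs_le _).trans' (neg_le_neg (habs i))) hgeom.neg hs2
  have key : |(-Real.log (1 - t) - t)| ≤ t ^ 2 / 2 * (1 - |t|)⁻¹ := abs_le.mpr ⟨lower, upper⟩
  have : -Real.log (1 - t) - t = -(Real.log (1 - t) + t) := by ring
  rw [this, abs_neg] at key
  calc |Real.log (1 - t) + t| ≤ t ^ 2 / 2 * (1 - |t|)⁻¹ := key
    _ = t ^ 2 / (2 * (1 - |t|)) := by rw [← div_eq_mul_inv, div_div]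

/-- For a symmetric matrix `F` with operator norm `< 1`, `log det(I − F)` equals the
trace of `log(I − F)` (computed through the eigendecomposition), and the
second-order remainder of the expansion `log det(I − F) ≈ −Tr F` is controlled by
the Frobenius norm. -/
theorem logdet_one_sub_trace_bound {n : ℕ}
    (F : Matrix (Fin n) (Fin n) ℝ) (hF : F.IsHermitian) (hnorm : ‖F‖ < 1) :
    Real.log ((1 : Matrix (Fin n) (Fin n) ℝ) - F).det =
      ∑ i, Real.log (1 - hF.eigenvalues i) ∧
    |Real.log ((1 : Matrix (Fin n) (Fin n) ℝ) - F).det + F.trace| ≤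
      (Real.sqrt (∑ i, ∑ j, (F i j) ^ 2)) ^ 2 / (2 * (1 - ‖F‖)) := by
  have hFnn : (0:ℝ) ≤ ‖F‖ := norm_nonneg F
  have hden : (0:ℝ) < 1 - ‖F‖ := by linarith
  -- eigenvalue bound
  have heig : ∀ i, |hF.eigenvalues i| ≤ ‖F‖ := by
    intro i
    have hx : ‖hF.eigenvectorBasis i‖ = 1 := hF.eigenvectorBasis.orthonormal.1 i
    have h1 := Matrix.l2_opNorm_mulVec F (hF.eigenvectorBasis i)
    have h2 : (EuclideanSpace.equiv (Fin n) ℝ).symm (F.mulVec (hF.eigenvectorBasis i)) =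
        (hF.eigenvalues i) • (hF.eigenvectorBasis i) := by
      rw [hF.mulVec_eigenvectorBasis i]; rfl
    rw [h2, norm_smul, hx, Real.norm_eq_abs] at h1
    simpa using h1
  have heig1 : ∀ i, 0 < 1 - hF.eigenvalues i := by
    intro i
    have := (abs_le.mp (heig i)).2
    linarith
  -- determinant identity
  set U := (hF.eigenvectorUnitary : Matrix (Fin n) (Fin n) ℝ) with hU
  have hUU : star U * U = 1 := Matrix.mem_unitaryGroup_iff'.mp hF.eigenvectorUnitary.2
  have hUU' : U * star U = 1 := Matrix.mem_unitaryGroup_iff.mp hF.eigenvectorUnitary.2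
  have hsp : F = U * Matrix.diagonal hF.eigenvalues * star U := by
    have h := hF.spectral_theorem
    rw [show (RCLike.ofReal ∘ hF.eigenvalues : Fin n → ℝ) = hF.eigenvalues from
      funext fun i => rfl] at h
    exact h
  have hone : (1 : Matrix (Fin n) (Fin n) ℝ) - F
      = U * ((1 : Matrix (Fin n) (Fin n) ℝ) - Matrix.diagonal hF.eigenvalues) * star U := by
    rw [Matrix.mul_sub, Matrix.sub_mul, Matrix.mul_one, hUU']
    rw [← hsp]
  have hdet : ((1 : Matrix (Fin n) (Fin n) ℝ) - F).det = ∏ i, (1 - hF.eigenvalues i) := by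
    rw [hone, Matrix.det_mul_right_comm, hUU', Matrix.one_mul]
    rw [show (1 : Matrix (Fin n) (Fin n) ℝ) - Matrix.diagonal hF.eigenvalues
        = Matrix.diagonal (fun i => 1 - hF.eigenvalues i) from by
      rw [← Matrix.diagonal_one, Matrix.diagonal_sub]]
    exact Matrix.det_diagonal
  have hlogdet : Real.log ((1 : Matrix (Fin n) (Fin n) ℝ) - F).det
      = ∑ i, Real.log (1 - hF.eigenvalues i) := by
    rw [hdet]
    exact Real.log_prod (fun i _ => (heig1 i).ne')
  refine ⟨hlogdet, ?_⟩
  -- trace identity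
  have htrace : F.trace = ∑ i, hF.eigenvalues i := by
    conv_lhs => rw [hsp]
    rw [Matrix.trace_mul_cycle, hUU, Matrix.one_mul, Matrix.trace_diagonal]
  -- Frobenius identity
  have hsqF : F * F = U * Matrix.diagonal (fun i => hF.eigenvalues i * hF.eigenvalues i)
      * star U := by
    conv_lhs => rw [hsp]
    rw [show ∀ A B C D E G : Matrix (Fin n) (Fin n) ℝ,
        A * B * C * (D * E * G) = A * (B * (C * D) * E) * G from fun _ _ _ _ _ _ => by
      simp only [Matrix.mul_assoc]]
    rw [hUU, Matrix.mul_one, Matrix.diagonal_mul_diagonal]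
  have hfro : ∑ i, ∑ j, (F i j) ^ 2 = ∑ i, (hF.eigenvalues i) ^ 2 := by
    have h1 : (F * F).trace = ∑ i, ∑ j, (F i j) ^ 2 := by
      rw [Matrix.trace]
      simp only [Matrix.diag_apply, Matrix.mul_apply]
      refine Finset.sum_congr rfl fun i _ => Finset.sum_congr rfl fun j _ => ?_
      have : F j i = F i j := by
        conv_lhs => rw [← hF.eq]
        simp [Matrix.conjTranspose_apply]
      rw [this]; ring
    have h2 : (F * F).trace = ∑ i, (hF.eigenvalues i) ^ 2 := by
      rw [hsqF, Matrix.trace_mul_cycle, hUU, Matrix.one_mul, Matrix.trace_diagonal]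
      exact Finset.sum_congr rfl fun i _ => (sq _).symm
    rw [← h1, h2]
  have hsqrt : (Real.sqrt (∑ i, ∑ j, (F i j) ^ 2)) ^ 2 = ∑ i, ∑ j, (F i j) ^ 2 :=
    Real.sq_sqrt (Finset.sum_nonneg fun i _ => Finset.sum_nonneg fun j _ => sq_nonneg _)
  rw [hlogdet, htrace, hsqrt, hfro, ← Finset.sum_add_distrib]
  calc |∑ i, (Real.log (1 - hF.eigenvalues i) + hF.eigenvalues i)|
      ≤ ∑ i, |Real.log (1 - hF.eigenvalues i) + hF.eigenvalues i| :=
        Finset.abs_sum_le_sum_abs _ _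
    _ ≤ ∑ i, (hF.eigenvalues i) ^ 2 / (2 * (1 - ‖F‖)) := by
        refine Finset.sum_le_sum fun i _ => ?_
        have hlt : |hF.eigenvalues i| < 1 := lt_of_le_of_lt (heig i) hnorm
        refine (scalar_log_bound hlt).trans ?_
        apply div_le_div_of_nonneg_left (sq_nonneg _) (by positivity)
        have := heig i
        nlinarith
    _ = (∑ i, (hF.eigenvalues i) ^ 2) / (2 * (1 - ‖F‖)) := by rw [Finset.sum_div]
end
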